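/- In F_2[x_1,x_2,x_3,x_4], the monomial x_1^5 x_2^5 x_3^5 x_4^5 satisfies x_1^5 x_2^5 x_3^5 x_4^5 ≡ Σ_σ σ(x_1^6 x_2^6 x_3^4 x_4^4) + Σ_σ σ(x_1^{10} x_2^4 x_3^3 x_4^3) modulo hit elements, where σ ranges over permutations giving distinct monomials. -/

import Mathlib

open MvPolynomial

/-- The action of the mod-2 Steenrod squares on F₂[x₁,…,xₙ]: F₂-linear operations
Sq i with Sq 0 = id, Sq 1 xᵢ = xᵢ², Sq k xᵢ = 0 for k ≥ 2, and the Cartan formula.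
These properties determine the action uniquely. -/
structure SteenrodAction (n : ℕ) where
  Sq : ℕ → MvPolynomial (Fin n) (ZMod 2) →ₗ[ZMod 2] MvPolynomial (Fin n) (ZMod 2)
  sq_zero : ∀ p, Sq 0 p = p
  sq_one_var : ∀ i, Sq 1 (X i) = X i ^ 2
  sq_var_eq_zero : ∀ i k, 2 ≤ k → Sq k (X i) = 0
  cartan : ∀ k u v, Sq k (u * v) = ∑ ij ∈ Finset.HasAntidiagonal.antidiagonal k, Sq ij.1 u * Sq ij.2 v

/-- `p` is hit: it lies in the span of the images of the positive-degree Steenrod operations. -/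
def SteenrodAction.IsHit {n : ℕ} (A : SteenrodAction n)
    (p : MvPolynomial (Fin n) (ZMod 2)) : Prop :=
  p ∈ Submodule.span (ZMod 2) {q | ∃ i, 0 < i ∧ ∃ u, q = A.Sq i u}

open scoped Classical in
/-- The symmetrization of the monomial with exponent vector d: the sum of the distinct
monomials obtained by permuting the exponents. -/
noncomputable def symSum (d : Fin 4 → ℕ) : MvPolynomial (Fin 4) (ZMod 2) :=
  ∑ q ∈ (Finset.univ.image fun σ : Equiv.Perm (Fin 4) => ∏ i, X i ^ d (σ i)), q

noncomputable def M4 (e : Fin 4 → ℕ) : MvPolynomial (Fin 4) (ZMod 2) :=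
  monomial (Finsupp.equivFunOnFinite.symm e) 1

lemma M4_eq (e : Fin 4 → ℕ) : M4 e = ∏ i, (X i : MvPolynomial (Fin 4) (ZMod 2)) ^ e i := by
  rw [M4, ← prod_X_pow_eq_monomial]
  refine Finset.prod_subset (Finset.subset_univ _) ?_
  intro i _ hi
  simp [Finsupp.notMem_support_iff.mp hi]

lemma M4_inj : Function.Injective M4 :=
  (monomial_left_injective (one_ne_zero)).comp Finsupp.equivFunOnFinite.symm.injective

lemma M4_vec (a b c d : ℕ) :
    M4 ![a, b, c, d] = X 0 ^ a * X 1 ^ b * X 2 ^ c * X 3 ^ d := by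
  rw [M4_eq, Fin.prod_univ_four]
  simp

lemma symSum_eq_image (d : Fin 4 → ℕ) :
    symSum d = ∑ e ∈ (Finset.univ.image fun σ : Equiv.Perm (Fin 4) => fun i => d (σ i)), M4 e := by
  classical
  rw [symSum]
  rw [show (Finset.univ.image fun σ : Equiv.Perm (Fin 4) => ∏ i, (X i : MvPolynomial (Fin 4) (ZMod 2)) ^ d (σ i))
      = ((Finset.univ.image fun σ : Equiv.Perm (Fin 4) => fun i => d (σ i)).image M4) from by
    rw [Finset.image_image]
    exact Finset.image_congr fun σ _ => (M4_eq _).symm]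
  exact Finset.sum_image fun x _ y _ h => M4_inj h

namespace SteenrodAction

variable (A : SteenrodAction 4)

lemma sq_one_eq_zero : ∀ k, 0 < k → A.Sq k (1 : MvPolynomial (Fin 4) (ZMod 2)) = 0 := by
  intro k
  induction k using Nat.strong_induction_on with
  | _ k ih =>
    intro hk
    have h := A.cartan k (X 0) 1
    rw [mul_one, Finset.Nat.sum_antidiagonal_eq_sum_range_succ_mk] at h
    match k, hk with
    | 1, _ =>
      rw [Finset.sum_range_succ, Finset.sum_range_succ, Finset.sum_range_zero] at h
      norm_num at h
      simp only [A.sq_zero] at h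
      rw [A.sq_one_var] at h
      have h0 : X 0 * A.Sq 1 (1 : MvPolynomial (Fin 4) (ZMod 2)) = 0 := by
        linear_combination -h
      exact (mul_eq_zero.mp h0).resolve_left (X_ne_zero 0)
    | (m+2), _ =>
      rw [Finset.sum_range_succ', A.sq_zero, A.sq_var_eq_zero 0 (m+2) (by omega)] at h
      have hz : ∀ j ∈ Finset.range (m + 2),
          A.Sq (j+1) (X 0) * A.Sq (m + 2 - (j+1)) (1 : MvPolynomial (Fin 4) (ZMod 2)) = 0 := by
        intro j hj
        match j with
        | 0 =>
          rw [ih (m + 2 - 1) (by omega) (by omega), mul_zero]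
        | (j+1) =>
          rw [A.sq_var_eq_zero 0 (j+2) (by omega), zero_mul]
      rw [Finset.sum_eq_zero hz, zero_add, Nat.sub_zero] at h
      exact (mul_eq_zero.mp h.symm).resolve_left (X_ne_zero 0)

lemma sq_mul_X (n : ℕ) (u : MvPolynomial (Fin 4) (ZMod 2)) (i : Fin 4) :
    A.Sq (n+1) (u * X i) = A.Sq (n+1) u * X i + A.Sq n u * X i ^ 2 := by
  rw [A.cartan, Finset.Nat.sum_antidiagonal_eq_sum_range_succ_mk,
    Finset.sum_range_succ, Finset.sum_range_succ]
  have h1 : n + 1 - n = 1 := by omega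
  rw [Nat.sub_self, h1]
  simp only [A.sq_zero]
  rw [A.sq_one_var]
  rw [Finset.sum_eq_zero (fun j hj => by
    rw [A.sq_var_eq_zero i (n+1-j) (by simp at hj; omega), mul_zero]), zero_add, add_comm]

lemma sq_X_pow (i : Fin 4) (m : ℕ) : ∀ k, A.Sq k (X i ^ m)
    = C ((m.choose k : ZMod 2)) * X i ^ (m + k) := by
  induction m with
  | zero =>
    intro k
    match k with
    | 0 => simp [A.sq_zero]
    | (k+1) =>
      rw [pow_zero, A.sq_one_eq_zero (k+1) (by omega), Nat.choose_eq_zero_of_lt (by omega)]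
      simp
  | succ m ih =>
    intro k
    match k with
    | 0 => simp [A.sq_zero]
    | (k+1) =>
      rw [pow_succ, A.sq_mul_X, ih, ih, Nat.choose_succ_succ, Nat.cast_add, map_add]
      ring

lemma sq_mul_pow (k : ℕ) (u : MvPolynomial (Fin 4) (ZMod 2)) (i : Fin 4) (m : ℕ) :
    A.Sq k (u * X i ^ m) = ∑ j ∈ Finset.range (k+1),
      A.Sq j u * (C ((m.choose (k-j) : ZMod 2)) * X i ^ (m + (k - j))) := by
  rw [A.cartan, Finset.Nat.sum_antidiagonal_eq_sum_range_succ_mk]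
  exact Finset.sum_congr rfl fun j _ => by rw [A.sq_X_pow]

end SteenrodAction

lemma char2_mul_two (x : MvPolynomial (Fin 4) (ZMod 2)) : x * 2 = 0 := by
  rw [show (2 : MvPolynomial (Fin 4) (ZMod 2)) = 0 from by
    exact_mod_cast CharP.cast_eq_zero (MvPolynomial (Fin 4) (ZMod 2)) 2, mul_zero]

lemma char2_mul_three (x : MvPolynomial (Fin 4) (ZMod 2)) : x * 3 = x := by
  have h : x * 3 = x * 2 + x := by ring
  rw [h, char2_mul_two, zero_add]

lemma char2_mul_four (x : MvPolynomial (Fin 4) (ZMod 2)) : x * 4 = 0 := by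
  have h : x * 4 = x * 2 + x * 2 := by ring
  rw [h, char2_mul_two, zero_add]

lemma char2_mul_five (x : MvPolynomial (Fin 4) (ZMod 2)) : x * 5 = x := by
  have h : x * 5 = x * 4 + x := by ring
  rw [h, char2_mul_four, zero_add]

lemma symSum_6644 : symSum ![6, 6, 4, 4] = X 0 ^ 6 * X 1 ^ 6 * X 2 ^ 4 * X 3 ^ 4 + X 0 ^ 6 * X 1 ^ 4 * X 2 ^ 6 * X 3 ^ 4 + X 0 ^ 6 * X 1 ^ 4 * X 2 ^ 4 * X 3 ^ 6 + X 0 ^ 4 * X 1 ^ 6 * X 2 ^ 6 * X 3 ^ 4 + X 0 ^ 4 * X 1 ^ 6 * X 2 ^ 4 * X 3 ^ 6 + X 0 ^ 4 * X 1 ^ 4 * X 2 ^ 6 * X 3 ^ 6 := by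
  rw [symSum_eq_image, show (Finset.univ.image fun σ : Equiv.Perm (Fin 4) => fun i => (![6, 6, 4, 4] : Fin 4 → ℕ) (σ i)) = ({![6, 6, 4, 4], ![6, 4, 6, 4], ![6, 4, 4, 6], ![4, 6, 6, 4], ![4, 6, 4, 6], ![4, 4, 6, 6]} : Finset (Fin 4 → ℕ)) from by decide]
  rw [Finset.sum_insert (by decide), Finset.sum_insert (by decide), Finset.sum_insert (by decide), Finset.sum_insert (by decide), Finset.sum_insert (by decide), Finset.sum_singleton]
  rw [M4_vec, M4_vec, M4_vec, M4_vec, M4_vec, M4_vec]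
  ring

lemma symSum_10433 : symSum ![10, 4, 3, 3] = X 0 ^ 10 * X 1 ^ 4 * X 2 ^ 3 * X 3 ^ 3 + X 0 ^ 10 * X 1 ^ 3 * X 2 ^ 4 * X 3 ^ 3 + X 0 ^ 10 * X 1 ^ 3 * X 2 ^ 3 * X 3 ^ 4 + X 0 ^ 4 * X 1 ^ 10 * X 2 ^ 3 * X 3 ^ 3 + X 0 ^ 4 * X 1 ^ 3 * X 2 ^ 10 * X 3 ^ 3 + X 0 ^ 4 * X 1 ^ 3 * X 2 ^ 3 * X 3 ^ 10 + X 0 ^ 3 * X 1 ^ 10 * X 2 ^ 4 * X 3 ^ 3 + X 0 ^ 3 * X 1 ^ 10 * X 2 ^ 3 * X 3 ^ 4 + X 0 ^ 3 * X 1 ^ 4 * X 2 ^ 10 * X 3 ^ 3 + X 0 ^ 3 * X 1 ^ 4 * X 2 ^ 3 * X 3 ^ 10 + X 0 ^ 3 * X 1 ^ 3 * X 2 ^ 10 * X 3 ^ 4 + X 0 ^ 3 * X 1 ^ 3 * X 2 ^ 4 * X 3 ^ 10 := by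
  rw [symSum_eq_image, show (Finset.univ.image fun σ : Equiv.Perm (Fin 4) => fun i => (![10, 4, 3, 3] : Fin 4 → ℕ) (σ i)) = ({![10, 4, 3, 3], ![10, 3, 4, 3], ![10, 3, 3, 4], ![4, 10, 3, 3], ![4, 3, 10, 3], ![4, 3, 3, 10], ![3, 10, 4, 3], ![3, 10, 3, 4], ![3, 4, 10, 3], ![3, 4, 3, 10], ![3, 3, 10, 4], ![3, 3, 4, 10]} : Finset (Fin 4 → ℕ)) from by decide]
  rw [Finset.sum_insert (by decide), Finset.sum_insert (by decide), Finset.sum_insert (by decide), Finset.sum_insert (by decide), Finset.sum_insert (by decide), Finset.sum_insert (by decide), Finset.sum_insert (by decide), Finset.sum_insert (by decide), Finset.sum_insert (by decide), Finset.sum_insert (by decide), Finset.sum_insert (by decide), Finset.sum_singleton]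
  rw [M4_vec, M4_vec, M4_vec, M4_vec, M4_vec, M4_vec, M4_vec, M4_vec, M4_vec, M4_vec, M4_vec, M4_vec]
  ring

set_option maxHeartbeats 4000000 in
lemma key (A : SteenrodAction 4) :
    (∏ i, (X i : MvPolynomial (Fin 4) (ZMod 2)) ^ 5) + symSum ![6, 6, 4, 4] + symSum ![10, 4, 3, 3]
      = A.Sq 1 (X 0 ^ 10 * X 1 ^ 3 * X 2 ^ 3 * X 3 ^ 3 + X 0 ^ 3 * X 1 ^ 10 * X 2 ^ 3 * X 3 ^ 3 + X 0 ^ 3 * X 1 ^ 3 * X 2 ^ 10 * X 3 ^ 3 + X 0 ^ 3 * X 1 ^ 3 * X 2 ^ 3 * X 3 ^ 10) + A.Sq 2 (X 0 ^ 5 * X 1 ^ 5 * X 2 ^ 5 * X 3 ^ 3 + X 0 ^ 5 * X 1 ^ 5 * X 2 ^ 3 * X 3 ^ 5 + X 0 ^ 5 * X 1 ^ 3 * X 2 ^ 5 * X 3 ^ 5 + X 0 ^ 3 * X 1 ^ 5 * X 2 ^ 5 * X 3 ^ 5) + A.Sq 8 (X 0 ^ 3 * X 1 ^ 3 * X 2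 ^ 3 * X 3 ^ 3) := by
  rw [symSum_6644, symSum_10433, Fin.prod_univ_four]
  simp only [map_add]
  simp only [SteenrodAction.sq_mul_pow, SteenrodAction.sq_X_pow, Finset.sum_range_succ,
    Finset.sum_range_zero, Nat.reduceAdd, Nat.reduceSub, zero_add]
  simp only [
    show ((Nat.choose 3 0 : ℕ) : ZMod 2) = 1 by decide,
    show ((Nat.choose 3 1 : ℕ) : ZMod 2) = 1 by decide,
    show ((Nat.choose 3 2 : ℕ) : ZMod 2) = 1 by decide,
    show ((Nat.choose 3 3 : ℕ) : ZMod 2) = 1 by decide,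
    show ((Nat.choose 3 4 : ℕ) : ZMod 2) = 0 by decide,
    show ((Nat.choose 3 5 : ℕ) : ZMod 2) = 0 by decide,
    show ((Nat.choose 3 6 : ℕ) : ZMod 2) = 0 by decide,
    show ((Nat.choose 3 7 : ℕ) : ZMod 2) = 0 by decide,
    show ((Nat.choose 3 8 : ℕ) : ZMod 2) = 0 by decide,
    show ((Nat.choose 5 0 : ℕ) : ZMod 2) = 1 by decide,
    show ((Nat.choose 5 1 : ℕ) : ZMod 2) = 1 by decide,
    show ((Nat.choose 5 2 : ℕ) : ZMod 2) = 0 by decide,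
    show ((Nat.choose 5 3 : ℕ) : ZMod 2) = 0 by decide,
    show ((Nat.choose 5 4 : ℕ) : ZMod 2) = 1 by decide,
    show ((Nat.choose 5 5 : ℕ) : ZMod 2) = 1 by decide,
    show ((Nat.choose 5 6 : ℕ) : ZMod 2) = 0 by decide,
    show ((Nat.choose 5 7 : ℕ) : ZMod 2) = 0 by decide,
    show ((Nat.choose 5 8 : ℕ) : ZMod 2) = 0 by decide,
    show ((Nat.choose 10 0 : ℕ) : ZMod 2) = 1 by decide,
    show ((Nat.choose 10 1 : ℕ) : ZMod 2) = 0 by decide,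
    show ((Nat.choose 10 2 : ℕ) : ZMod 2) = 1 by decide,
    show ((Nat.choose 10 3 : ℕ) : ZMod 2) = 0 by decide,
    show ((Nat.choose 10 4 : ℕ) : ZMod 2) = 0 by decide,
    show ((Nat.choose 10 5 : ℕ) : ZMod 2) = 0 by decide,
    show ((Nat.choose 10 6 : ℕ) : ZMod 2) = 0 by decide,
    show ((Nat.choose 10 7 : ℕ) : ZMod 2) = 0 by decide,
    show ((Nat.choose 10 8 : ℕ) : ZMod 2) = 1 by decide,
    map_one, map_zero, one_mul, mul_one, zero_mul, mul_zero, add_zero, zero_add]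
  ring_nf
  simp only [char2_mul_two, char2_mul_three, char2_mul_four, char2_mul_five, add_zero, zero_add]

/-- modulo hit elements, x^{5555} ≡ Σ_σ σ(x^{6644}) + Σ_σ σ(x^{10,4,3,3})
(over F₂ the congruence means the sum of the three terms is hit). -/
theorem stmt19 (A : SteenrodAction 4) :
    A.IsHit ((∏ i, X i ^ 5) + symSum ![6, 6, 4, 4] + symSum ![10, 4, 3, 3]) := by
  rw [key A]
  exact Submodule.add_mem _ (Submodule.add_mem _
    (Submodule.subset_span ⟨1, one_pos, _, rfl⟩)
    (Submodule.subset_span ⟨2, by norm_num, _, rfl⟩))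
    (Submodule.subset_span ⟨8, by norm_num, _, rfl⟩)
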